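/- arXiv:1807.04627 — 8 statements merged into one kernel-verified Lean document; each statement's English description precedes it below -/
import Mathlib

section
/- The function ũ(x,y) = Σ_{j=0}^{⌊n/2⌋} (-1)^j · [n!·(m-1)!·∏_{k=0}^{j}(m+3k) / ((m+3j+2)!·(n-2j)!)] · y^{m+3j+2} · x^{n-2j} satisfies the inhomogeneous Tricomi equation y·ũ_xx + ũ_yy = x^n · y^m for all real x, y. -/
/-!
Write `ũ = ∑ⱼ cⱼ y^(aⱼ) x^(bⱼ)` with `aⱼ = m + 3j + 2` and `bⱼ = n - 2j`. The Tricomi operator sends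
a monomial `y^a x^b` to `b(b-1) y^(a+1) x^(b-2) + a(a-1) y^(a-2) x^b`, and `aⱼ₊₁ - 2 = aⱼ + 1`,
`bⱼ₊₁ = bⱼ - 2`, so the first part of the `j`-th image and the second part of the `(j+1)`-st
are the same monomial. The coefficients are chosen so that these cancel; the sum telescopes to
the second part of the `0`-th image, which is `xⁿ yᵐ`, because the first part of the last image
carries the factor `b(b-1) = 0` for `b = n - 2⌊n/2⌋ ∈ {0, 1}`.
-/

open Finset

section Derivatives

variable {𝕜 ι : Type*} [NontriviallyNormedField 𝕜]

theorem deriv_sum_mul_pow (s : Finset ι) (c : ι → 𝕜) (e : ι → ℕ) :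
    deriv (fun t => ∑ j ∈ s, c j * t ^ e j) = fun t => ∑ j ∈ s, (c j * e j) * t ^ (e j - 1) := by
  funext t
  rw [deriv_fun_sum fun j _ => ((differentiable_pow (e j)).const_mul (c j)).differentiableAt]
  simp only [deriv_const_mul_field', deriv_pow_field, mul_assoc]

theorem deriv_deriv_sum_mul_pow (s : Finset ι) (c : ι → 𝕜) (e : ι → ℕ) :
    deriv (deriv fun t => ∑ j ∈ s, c j * t ^ e j)
      = fun t => ∑ j ∈ s, (c j * e j * (e j - 1 : ℕ)) * t ^ (e j - 2) := by
  simp only [deriv_sum_mul_pow, Nat.sub_sub]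

end Derivatives

theorem Finset.sum_range_succ_add_eq_of_cancel {M : Type*} [AddCommGroup M] (f g : ℕ → M)
    (N : ℕ) (hcancel : ∀ j < N, f j + g (j + 1) = 0) (hlast : f N = 0) :
    ∑ j ∈ range (N + 1), (f j + g j) = g 0 := by
  rw [sum_add_distrib, sum_range_succ, sum_range_succ', hlast, add_zero, ← add_assoc,
    ← sum_add_distrib, sum_eq_zero fun j hj => hcancel j (mem_range.mp hj), zero_add]

noncomputable def tricomi (u : ℝ → ℝ → ℝ) (x y : ℝ) : ℝ :=
  y * deriv (deriv fun x' => u x' y) x + deriv (deriv fun y' => u x y') y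

theorem tricomi_sum_monomial {ι : Type*} (s : Finset ι) (c : ι → ℝ) (a b : ι → ℕ) (x y : ℝ) :
    tricomi (fun x y => ∑ j ∈ s, c j * y ^ a j * x ^ b j) x y
      = ∑ j ∈ s, (c j * (b j * (b j - 1 : ℕ)) * y ^ (a j + 1) * x ^ (b j - 2)
          + c j * (a j * (a j - 1 : ℕ)) * y ^ (a j - 2) * x ^ b j) := by
  have hx : (fun x' => ∑ j ∈ s, c j * y ^ a j * x' ^ b j)
      = fun t => ∑ j ∈ s, (c j * y ^ a j) * t ^ b j := rfl
  have hy : (fun y' => ∑ j ∈ s, c j * y' ^ a j * x ^ b j)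
      = fun t => ∑ j ∈ s, (c j * x ^ b j) * t ^ a j := by
    funext t; exact sum_congr rfl fun j _ => by ring
  rw [tricomi, hx, hy, deriv_deriv_sum_mul_pow, deriv_deriv_sum_mul_pow, mul_sum, ← sum_add_distrib]
  exact sum_congr rfl fun j _ => by ring

noncomputable def tricomiCoeff (n m j : ℕ) : ℝ :=
  (-1 : ℝ) ^ j *
    ((n.factorial : ℝ) * ((m - 1).factorial : ℝ) *
        (∏ k ∈ range (j + 1), ((m + 3 * k : ℕ) : ℝ)) /
      (((m + 3 * j + 2).factorial : ℝ) * ((n - 2 * j).factorial : ℝ)))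

theorem tricomiCoeff_zero_mul {n m : ℕ} (hm : 1 ≤ m) :
    tricomiCoeff n m 0 * ((m + 2 : ℕ) * (m + 1 : ℕ)) = 1 := by
  obtain ⟨m, rfl⟩ : ∃ m', m = m' + 1 := ⟨m - 1, by omega⟩
  simp only [tricomiCoeff, zero_add, prod_range_one, pow_zero, mul_zero, add_zero, Nat.sub_zero,
    Nat.add_sub_cancel, Nat.factorial_succ]
  push_cast
  field_simp
  ring

/-- `aⱼ₊₁! = aⱼ₊₁ (aⱼ₊₁ - 1) (aⱼ + 1) aⱼ!`, and the extra factor `aⱼ + 1 = m + 3(j+1)` is the one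
gained by the product. -/
theorem tricomiCoeff_mul_add_tricomiCoeff_succ_mul {n m j : ℕ} (h : 2 * (j + 1) ≤ n) :
    tricomiCoeff n m j * ((n - 2 * j : ℕ) * (n - 2 * j - 1 : ℕ))
      + tricomiCoeff n m (j + 1) * ((m + 3 * (j + 1) + 2 : ℕ) * (m + 3 * (j + 1) + 2 - 1 : ℕ))
      = 0 := by
  obtain ⟨k, hk⟩ : ∃ k, n - 2 * j = k + 2 := ⟨n - 2 * j - 2, by omega⟩
  have hk' : n - 2 * (j + 1) = k := by omega
  have ha : m + 3 * (j + 1) + 2 = m + 3 * j + 2 + 3 := by ring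
  simp only [tricomiCoeff, hk, hk', ha, prod_range_succ _ (j + 1), Nat.factorial_succ, pow_succ]
  push_cast
  field_simp
  ring

/-- A particular polynomial solution of the inhomogeneous Tricomi equation
`y·u_xx + u_yy = xⁿ·yᵐ` (formula (6) of the paper), for `m ≥ 1`. -/
theorem tricomi_particular_solution (n m : ℕ) (hm : 1 ≤ m)
    (u : ℝ → ℝ → ℝ)
    (hu : ∀ x y : ℝ, u x y =
      ∑ j ∈ Finset.range (n / 2 + 1),
        (-1 : ℝ) ^ j *
          ((n.factorial : ℝ) * ((m - 1).factorial : ℝ) *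
              (∏ k ∈ Finset.range (j + 1), ((m + 3 * k : ℕ) : ℝ)) /
            (((m + 3 * j + 2).factorial : ℝ) * ((n - 2 * j).factorial : ℝ))) *
          y ^ (m + 3 * j + 2) * x ^ (n - 2 * j)) :
    ∀ x y : ℝ,
      y * deriv (deriv (fun x' => u x' y)) x + deriv (deriv (fun y' => u x y')) y
        = x ^ n * y ^ m := by
  intro x y
  have hu' : u = fun x y => ∑ j ∈ range (n / 2 + 1),
      tricomiCoeff n m j * y ^ (m + 3 * j + 2) * x ^ (n - 2 * j) := funext₂ hu
  change tricomi u x y = _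
  rw [hu', tricomi_sum_monomial]
  refine (sum_range_succ_add_eq_of_cancel _ _ _ (fun j hj => ?_) ?_).trans ?_
  · rw [show m + 3 * (j + 1) + 2 - 2 = m + 3 * j + 2 + 1 by omega,
      show n - 2 * (j + 1) = n - 2 * j - 2 by omega]
    linear_combination (y ^ (m + 3 * j + 2 + 1) * x ^ (n - 2 * j - 2)) *
      tricomiCoeff_mul_add_tricomiCoeff_succ_mul (m := m) (by omega : 2 * (j + 1) ≤ n)
  · rcases (by omega : n - 2 * (n / 2) = 0 ∨ n - 2 * (n / 2) - 1 = 0) with h | h <;> simp [h]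
  · simp only [mul_zero, add_zero, Nat.add_sub_cancel, Nat.sub_zero,
      show m + 2 - 1 = m + 1 from rfl]
    linear_combination (x ^ n * y ^ m) * tricomiCoeff_zero_mul (n := n) hm
end

section
/- For b > 0, the function u_4(x,y) = (1/(210b))·(−210x⁴y + 210x⁴b + 210x²y⁴ − 420x²y³b + 210x²yb³ − 10y⁷ + 28by⁶ − 35b³y⁴ + 17b⁶y) satisfies y·(u_4)_xx + (u_4)_yy = 0, u_4(x,0) = x⁴, and u_4(x,b) = 0 for all real x. -/
/-!
Everything is a direct computation with the polynomial `u₄`: its pure second derivatives are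
`u_xx = Q / b` and `u_yy = -y Q / b` with `Q = 12 x² (b - y) + 2 y (b³ - 2 b y² + y³)`,
so `y u_xx + u_yy` vanishes identically.
-/

noncomputable def tricomiU4 (b x y : ℝ) : ℝ :=
  (1/(210*b)) * (-210*x^4*y + 210*x^4*b + 210*x^2*y^4 - 420*x^2*y^3*b
    + 210*x^2*y*b^3 - 10*y^7 + 28*b*y^6 - 35*b^3*y^4 + 17*b^6*y)

namespace tricomiU4

variable (b : ℝ)

lemma deriv_x (y : ℝ) :
    deriv (fun x => tricomiU4 b x y) =
      fun x => (4*x^3*(b - y) + 2*x*y*(b^3 - 2*b*y^2 + y^3)) / b := by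
  funext x
  simp (disch := fun_prop) only [tricomiU4, deriv_fun_add, deriv_fun_sub, deriv_const_mul_field,
    deriv_mul_const_field, deriv_fun_pow, deriv_const, deriv_id'']
  ring

lemma deriv_deriv_x (x y : ℝ) :
    deriv (deriv fun x => tricomiU4 b x y) x =
      (12*x^2*(b - y) + 2*y*(b^3 - 2*b*y^2 + y^3)) / b := by
  simp (disch := fun_prop) only [deriv_x, deriv_div_const, deriv_fun_add, deriv_const_mul_field,
    deriv_const_mul_id, deriv_mul_const_field, deriv_fun_pow, deriv_id'']
  ring

lemma deriv_y (x : ℝ) :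
    deriv (fun y => tricomiU4 b x y) =
      fun y => (-x^4 + 4*x^2*y^3 - 6*b*x^2*y^2 + b^3*x^2 - y^6/3 + 4*b*y^5/5 - 2*b^3*y^3/3
        + 17*b^6/210) / b := by
  funext y
  simp (disch := fun_prop) only [tricomiU4, deriv_fun_add, deriv_fun_sub, deriv_const_mul_field,
    deriv_const_mul_id, deriv_mul_const_field, deriv_fun_pow, deriv_const, deriv_id'']
  ring

lemma deriv_deriv_y (x y : ℝ) :
    deriv (deriv fun y => tricomiU4 b x y) y =
      -y * (12*x^2*(b - y) + 2*y*(b^3 - 2*b*y^2 + y^3)) / b := by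
  simp (disch := fun_prop) only [deriv_y, deriv_div_const, deriv_fun_add, deriv_fun_sub,
    deriv_const_mul_field, deriv_fun_pow, deriv_const, deriv_id'']
  ring

theorem tricomi_eq_zero (x y : ℝ) :
    y * deriv (deriv fun x => tricomiU4 b x y) x + deriv (deriv fun y => tricomiU4 b x y) y = 0 := by
  rw [deriv_deriv_x, deriv_deriv_y]
  ring

lemma apply_zero {b : ℝ} (hb : b ≠ 0) (x : ℝ) : tricomiU4 b x 0 = x^4 := by
  simp only [tricomiU4]
  field_simp
  ring

lemma apply_self (x : ℝ) : tricomiU4 b x b = 0 := by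
  simp only [tricomiU4]
  ring

end tricomiU4

theorem tricomi_dirichlet_u4 (b : ℝ) (hb : 0 < b)
    (u : ℝ → ℝ → ℝ)
    (hu : ∀ x y : ℝ, u x y =
      (1/(210*b)) * (-210*x^4*y + 210*x^4*b + 210*x^2*y^4 - 420*x^2*y^3*b
        + 210*x^2*y*b^3 - 10*y^7 + 28*b*y^6 - 35*b^3*y^4 + 17*b^6*y)) :
    (∀ x y : ℝ,
      y * deriv (deriv (fun x' => u x' y)) x + deriv (deriv (fun y' => u x y')) y = 0)
    ∧ (∀ x : ℝ, u x 0 = x^4) ∧ (∀ x : ℝ, u x b = 0) := by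
  obtain rfl : u = tricomiU4 b := funext₂ hu
  exact ⟨tricomiU4.tricomi_eq_zero b, tricomiU4.apply_zero hb.ne', tricomiU4.apply_self b⟩
end

section
/- For b > 0, the function u_5(x,y) = (x/(42b))·(−42x⁴y + 42x⁴b + 70x²y⁴ − 140x²y³b + 70x²yb³ − 10y⁷ + 28by⁶ − 35b³y⁴ + 17b⁶y) satisfies y·(u_5)_xx + (u_5)_yy = 0, u_5(x,0) = x⁵, and u_5(x,b) = 0 for all real x. -/
/-! Both partial second derivatives are read off by viewing `u₅` as a polynomial in one variable
with coefficients in the other; they come out as `u_xx = 10 x q / b` and `u_yy = -y · 10 x q / b`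
with `q = 2 (b - y) x² + y (y³ - 2 b y² + b³)`, so the Tricomi equation holds identically. -/

open Polynomial

theorem Polynomial.deriv_deriv_eval {𝕜 : Type*} [NontriviallyNormedField 𝕜] (p : 𝕜[X]) :
    deriv (deriv fun x => p.eval x) = fun x => (derivative (derivative p)).eval x := by
  have hderiv : deriv (fun x => p.eval x) = fun x => (derivative p).eval x := by
    ext x
    exact p.deriv
  ext x
  rw [hderiv]
  exact (derivative p).deriv

noncomputable def tricomiU5 (b x y : ℝ) : ℝ :=
  (x/(42*b)) * (-42*x^4*y + 42*x^4*b + 70*x^2*y^4 - 140*x^2*y^3*b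
    + 70*x^2*y*b^3 - 10*y^7 + 28*b*y^6 - 35*b^3*y^4 + 17*b^6*y)

theorem tricomiU5_deriv_deriv_x (b x y : ℝ) :
    deriv (deriv fun x' => tricomiU5 b x' y) x
      = 10 * x * (2 * (b - y) * x^2 + y * (y^3 - 2*b*y^2 + b^3)) / b := by
  have hpoly : (fun x' => tricomiU5 b x' y) = fun x' =>
      (C (1 / (42 * b)) * (C (42 * (b - y)) * X^5 + C (70 * y * (y^3 - 2*b*y^2 + b^3)) * X^3
        + C (-10*y^7 + 28*b*y^6 - 35*b^3*y^4 + 17*b^6*y) * X)).eval x' := by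
    funext x'
    simp only [tricomiU5, eval_add, eval_mul, eval_C, eval_pow, eval_X]
    ring
  rw [hpoly, Polynomial.deriv_deriv_eval]
  simp only [derivative_C_mul, derivative_add, derivative_X_pow, derivative_X, derivative_one,
    eval_add, eval_mul, eval_C, eval_pow, eval_X, eval_zero]
  push_cast
  ring

theorem tricomiU5_deriv_deriv_y (b x y : ℝ) :
    deriv (deriv fun y' => tricomiU5 b x y') y
      = -(10 * x * y * (2 * (b - y) * x^2 + y * (y^3 - 2*b*y^2 + b^3)) / b) := by
  have hpoly : (fun y' => tricomiU5 b x y') = fun y' =>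
      (C (x / (42 * b)) * (C (-10) * X^7 + C (28 * b) * X^6 + C (70 * x^2 - 35 * b^3) * X^4
        - C (140 * x^2 * b) * X^3 + C (-42*x^4 + 70*x^2*b^3 + 17*b^6) * X
        + C (42 * x^4 * b))).eval y' := by
    funext y'
    simp only [tricomiU5, eval_add, eval_sub, eval_mul, eval_C, eval_pow, eval_X]
    ring
  rw [hpoly, Polynomial.deriv_deriv_eval]
  simp only [derivative_C_mul, derivative_add, derivative_sub, derivative_X_pow, derivative_X,
    derivative_C, derivative_one, derivative_zero, eval_add, eval_sub, eval_mul, eval_C, eval_pow,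
    eval_X, eval_zero]
  push_cast
  ring

theorem tricomiU5_tricomi (b x y : ℝ) :
    y * deriv (deriv fun x' => tricomiU5 b x' y) x + deriv (deriv fun y' => tricomiU5 b x y') y = 0 := by
  rw [tricomiU5_deriv_deriv_x, tricomiU5_deriv_deriv_y]
  ring

theorem tricomiU5_zero_right {b : ℝ} (hb : b ≠ 0) (x : ℝ) : tricomiU5 b x 0 = x ^ 5 := by
  simp only [tricomiU5]
  field_simp
  ring

theorem tricomiU5_self_right (b x : ℝ) : tricomiU5 b x b = 0 := by
  simp only [tricomiU5]
  ring

theorem tricomi_dirichlet_u5 (b : ℝ) (hb : 0 < b)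
    (u : ℝ → ℝ → ℝ)
    (hu : ∀ x y : ℝ, u x y =
      (x/(42*b)) * (-42*x^4*y + 42*x^4*b + 70*x^2*y^4 - 140*x^2*y^3*b
        + 70*x^2*y*b^3 - 10*y^7 + 28*b*y^6 - 35*b^3*y^4 + 17*b^6*y)) :
    (∀ x y : ℝ,
      y * deriv (deriv (fun x' => u x' y)) x + deriv (deriv (fun y' => u x y')) y = 0)
    ∧ (∀ x : ℝ, u x 0 = x^5) ∧ (∀ x : ℝ, u x b = 0) := by
  obtain rfl : u = tricomiU5 b := funext fun x => funext (hu x)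
  exact ⟨tricomiU5_tricomi b, tricomiU5_zero_right hb.ne', tricomiU5_self_right b⟩
end

section
/- For b > 0, the function v_3(x,y) = (xy/(2b))·(2x² − y³ + b³) satisfies y·(v_3)_xx + (v_3)_yy = 0, v_3(x,0) = 0, and v_3(x,b) = x³ for all real x. -/
/-!
Along each coordinate line `v₃` has the form `a t ^ k + c t` (cubic in `x`, quartic in `y`), so
both second derivatives are single monomials: `y · v_xx = 6 x y² / b` and `v_yy = -6 x y² / b`.
The boundary values are direct evaluation.
-/

theorem deriv_deriv_const_mul_pow_add_const_mul (a c : ℝ) (n : ℕ) (t : ℝ) :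
    deriv (deriv fun s : ℝ => a * s ^ (n + 2) + c * s) t
      = a * ((n + 2) * (n + 1)) * t ^ n := by
  have deriv_eq : deriv (fun s : ℝ => a * s ^ (n + 2) + c * s)
      = fun s => a * ((n + 2) * s ^ (n + 1)) + c := by
    funext s
    have h := ((hasDerivAt_pow (n + 2) s).const_mul a).add ((hasDerivAt_id' s).const_mul c)
    rw [mul_one] at h
    exact_mod_cast h.deriv
  rw [deriv_eq]
  simp [mul_assoc, add_comm]

theorem tricomi_dirichlet_v3 (b : ℝ) (hb : 0 < b)
    (v : ℝ → ℝ → ℝ)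
    (hv : ∀ x y : ℝ, v x y = (x*y/(2*b)) * (2*x^2 - y^3 + b^3)) :
    (∀ x y : ℝ,
      y * deriv (deriv (fun x' => v x' y)) x + deriv (deriv (fun y' => v x y')) y = 0)
    ∧ (∀ x : ℝ, v x 0 = 0) ∧ (∀ x : ℝ, v x b = x^3) := by
  have hb₀ : b ≠ 0 := hb.ne'
  refine ⟨fun x y => ?_, fun x => by rw [hv]; ring, fun x => by rw [hv]; field_simp; ring⟩
  have slice_x : (fun x' => v x' y)
      = fun x' => y / b * x' ^ 3 + y * (b ^ 3 - y ^ 3) / (2 * b) * x' := by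
    funext x'; rw [hv]; field_simp; ring
  have slice_y : (fun y' => v x y')
      = fun y' => -(x / (2 * b)) * y' ^ 4 + x * (2 * x ^ 2 + b ^ 3) / (2 * b) * y' := by
    funext y'; rw [hv]; field_simp; ring
  rw [slice_x, slice_y, deriv_deriv_const_mul_pow_add_const_mul,
    deriv_deriv_const_mul_pow_add_const_mul]
  field_simp
  ring
end

section
/- For b > 0, the function v_4(x,y) = (y/(42b))·(42x⁴ − 42x²y³ + 42x²b³ + 2y⁶ − 7b³y³ + 5b⁶) satisfies y·(v_4)_xx + (v_4)_yy = 0, v_4(x,0) = 0, and v_4(x,b) = x⁴ for all real x. -/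
/-! For fixed `y` the function `x ↦ v₄ x y` is a polynomial in `x`, and for fixed `x` the function
`y ↦ v₄ x y` is a polynomial in `y`, so both second partial derivatives are evaluations of formal
second derivatives, and the Tricomi equation becomes a polynomial identity. -/

open Polynomial

theorem deriv_deriv_polynomial_eval {𝕜 : Type*} [NontriviallyNormedField 𝕜] (p : 𝕜[X]) (x : 𝕜) :
    deriv (deriv fun x => p.eval x) x = (derivative (derivative p)).eval x := by
  have h : (deriv fun x => p.eval x) = fun x => p.derivative.eval x := funext fun _ => p.deriv
  rw [h, Polynomial.deriv]

noncomputable def tricomiV4 (b x y : ℝ) : ℝ :=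
  y / (42 * b) * (42 * x ^ 4 - 42 * x ^ 2 * y ^ 3 + 42 * x ^ 2 * b ^ 3 + 2 * y ^ 6 - 7 * b ^ 3 * y ^ 3 + 5 * b ^ 6)

theorem tricomiV4_x_section_eq_eval (b y : ℝ) :
    (tricomiV4 b · y) = fun x => eval x (C (y / b) * X ^ 4 + C (y / b * (b ^ 3 - y ^ 3)) * X ^ 2
      + C (y / (42 * b) * (2 * y ^ 6 - 7 * b ^ 3 * y ^ 3 + 5 * b ^ 6))) := by
  ext x
  simp only [tricomiV4, eval_mul, eval_add, eval_C, eval_pow, eval_X]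
  ring

theorem tricomiV4_y_section_eq_eval (b x : ℝ) :
    (tricomiV4 b x ·) = fun y => eval y (C ((42 * x ^ 4 + 42 * x ^ 2 * b ^ 3 + 5 * b ^ 6) / (42 * b)) * X
      - C ((6 * x ^ 2 + b ^ 3) / (6 * b)) * X ^ 4 + C (1 / (21 * b)) * X ^ 7) := by
  ext y
  simp only [tricomiV4, eval_mul, eval_add, eval_sub, eval_C, eval_pow, eval_X]
  ring

theorem tricomiV4_tricomi_eq_zero (b x y : ℝ) :
    y * deriv (deriv (tricomiV4 b · y)) x + deriv (deriv (tricomiV4 b x ·)) y = 0 := by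
  rw [tricomiV4_x_section_eq_eval, tricomiV4_y_section_eq_eval, deriv_deriv_polynomial_eval, deriv_deriv_polynomial_eval]
  simp only [derivative_add, derivative_sub, derivative_C_mul_X_pow, derivative_C_mul_X, derivative_C,
    add_zero, eval_add, eval_sub, eval_C, eval_mul, eval_pow, eval_X]
  norm_num
  ring

theorem tricomiV4_at_zero (b x : ℝ) : tricomiV4 b x 0 = 0 := by
  simp [tricomiV4]

theorem tricomiV4_at_self {b : ℝ} (hb : b ≠ 0) (x : ℝ) : tricomiV4 b x b = x ^ 4 := by
  rw [tricomiV4]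
  field_simp
  ring

theorem tricomi_dirichlet_v4 (b : ℝ) (hb : 0 < b)
    (v : ℝ → ℝ → ℝ)
    (hv : ∀ x y : ℝ, v x y =
      (y/(42*b)) * (42*x^4 - 42*x^2*y^3 + 42*x^2*b^3 + 2*y^6 - 7*b^3*y^3 + 5*b^6)) :
    (∀ x y : ℝ,
      y * deriv (deriv (fun x' => v x' y)) x + deriv (deriv (fun y' => v x y')) y = 0)
    ∧ (∀ x : ℝ, v x 0 = 0) ∧ (∀ x : ℝ, v x b = x^4) := by
  obtain rfl : v = tricomiV4 b := funext₂ hv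
  exact ⟨tricomiV4_tricomi_eq_zero b, tricomiV4_at_zero b, tricomiV4_at_self hb.ne'⟩
end

section
/- For b > 0, the function v_5(x,y) = (xy/(42b))·(42x⁴ − 70x²y³ + 70x²b³ + 10y⁶ − 35b³y³ + 25b⁶) satisfies y·(v_5)_xx + (v_5)_yy = 0, v_5(x,0) = 0, and v_5(x,b) = x⁵ for all real x. -/
/-!
For fixed `y`, `v` is a combination of `x⁵, x³, x`, and for fixed `x` one of `y⁷, y⁴, y`.
Both second derivatives are therefore instances of one formula for `a tᵐ⁺² + b tⁿ⁺² + c t`,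
after which the Tricomi equation is a polynomial identity.
-/

theorem hasDerivAt_two_monomials_add_linear (a b c t : ℝ) (m n : ℕ) :
    HasDerivAt (fun t => a * t ^ (m + 1) + b * t ^ (n + 1) + c * t)
      (a * (m + 1) * t ^ m + b * (n + 1) * t ^ n + c) t := by
  refine ((((hasDerivAt_pow (m + 1) t).const_mul a).add
    ((hasDerivAt_pow (n + 1) t).const_mul b)).add ((hasDerivAt_id t).const_mul c)).congr_deriv ?_
  push_cast
  ring

theorem deriv_deriv_two_monomials_add_linear (a b c t : ℝ) (m n : ℕ) :
    deriv (deriv fun t => a * t ^ (m + 2) + b * t ^ (n + 2) + c * t) t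
      = a * (m + 2) * (m + 1) * t ^ m + b * (n + 2) * (n + 1) * t ^ n := by
  have first_deriv : deriv (fun t => a * t ^ (m + 2) + b * t ^ (n + 2) + c * t)
      = fun t => a * (m + 2) * t ^ (m + 1) + b * (n + 2) * t ^ (n + 1) + 0 * t + c := by
    funext t
    rw [(hasDerivAt_two_monomials_add_linear a b c t (m + 1) (n + 1)).deriv]
    push_cast
    ring
  rw [first_deriv, ((hasDerivAt_two_monomials_add_linear _ _ 0 t m n).add_const c).deriv]
  ring

theorem tricomi_dirichlet_v5 (b : ℝ) (hb : 0 < b)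
    (v : ℝ → ℝ → ℝ)
    (hv : ∀ x y : ℝ, v x y =
      (x*y/(42*b)) * (42*x^4 - 70*x^2*y^3 + 70*x^2*b^3 + 10*y^6 - 35*b^3*y^3 + 25*b^6)) :
    (∀ x y : ℝ,
      y * deriv (deriv (fun x' => v x' y)) x + deriv (deriv (fun y' => v x y')) y = 0)
    ∧ (∀ x : ℝ, v x 0 = 0) ∧ (∀ x : ℝ, v x b = x^5) := by
  have hb₀ : b ≠ 0 := hb.ne'
  have slice_x : ∀ y, (fun x => v x y) = fun x => (y / b) * x ^ (3 + 2)
      + (5 * y * (b ^ 3 - y ^ 3) / (3 * b)) * x ^ (1 + 2)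
      + (y * (10 * y ^ 6 - 35 * b ^ 3 * y ^ 3 + 25 * b ^ 6) / (42 * b)) * x := by
    intro y; funext x; rw [hv]; field_simp; ring
  have slice_y : ∀ x, (fun y => v x y) = fun y => (5 * x / (21 * b)) * y ^ (5 + 2)
      + (-5 * x * (2 * x ^ 2 + b ^ 3) / (6 * b)) * y ^ (2 + 2)
      + (x * (42 * x ^ 4 + 70 * x ^ 2 * b ^ 3 + 25 * b ^ 6) / (42 * b)) * y := by
    intro x; funext y; rw [hv]; field_simp; ring
  refine ⟨fun x y => ?_, fun x => by rw [hv]; ring, fun x => by rw [hv]; field_simp; ring⟩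
  rw [slice_x, slice_y, deriv_deriv_two_monomials_add_linear,
    deriv_deriv_two_monomials_add_linear]
  push_cast
  field_simp
  ring
end

section
/- For a > 0, the function u_3(x,y) = (x/(4a))·(−2x²y + 2ax² + y⁴ − 2ay³ + 2a³y − a⁴) satisfies y·(u_3)_xx + (u_3)_yy = 0, u_3(x,−a) = x³, and u_3(x,a) = 0 for all real x. -/
/-! Every slice of `u₃` is a polynomial in one variable, so its second partials are read off
from `Polynomial.derivative`: `∂ₓ² u₃ = 3x(a - y)/a` and `∂ᵧ² u₃ = 3xy(y - a)/a`, which cancel in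
`y ∂ₓ² u₃ + ∂ᵧ² u₃`. -/

open Polynomial

noncomputable def tricomiU3 (a x y : ℝ) : ℝ :=
  (x/(4*a)) * (-2*x^2*y + 2*a*x^2 + y^4 - 2*a*y^3 + 2*a^3*y - a^4)

section tricomiU3

variable (a x y : ℝ)

theorem tricomiU3_eq_eval_left : (fun x' => tricomiU3 a x' y) = fun x' =>
    (C ((2*a - 2*y)/(4*a)) * X^3 + C ((y^4 - 2*a*y^3 + 2*a^3*y - a^4)/(4*a)) * X).eval x' := by
  funext x'
  simp only [tricomiU3, eval_add, eval_mul, eval_C, eval_pow, eval_X]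
  ring

theorem tricomiU3_eq_eval_right : (fun y' => tricomiU3 a x y') = fun y' =>
    (C (x/(4*a)) * X^4 + C (-2*a*x/(4*a)) * X^3 + C (x*(2*a^3 - 2*x^2)/(4*a)) * X
      + C (x*(2*a*x^2 - a^4)/(4*a))).eval y' := by
  funext y'
  simp only [tricomiU3, eval_add, eval_mul, eval_C, eval_pow, eval_X]
  ring

theorem deriv_deriv_tricomiU3_left :
    deriv (deriv fun x' => tricomiU3 a x' y) x = 3 * x * (a - y) / a := by
  rw [tricomiU3_eq_eval_left, deriv_deriv_polynomial_eval]
  simp only [derivative_add, derivative_C_mul_X_pow, derivative_C_mul_X, derivative_C,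
    eval_add, eval_mul, eval_C, eval_pow, eval_X, eval_zero]
  ring

theorem deriv_deriv_tricomiU3_right :
    deriv (deriv fun y' => tricomiU3 a x y') y = 3 * x * y * (y - a) / a := by
  rw [tricomiU3_eq_eval_right, deriv_deriv_polynomial_eval]
  simp only [derivative_add, derivative_C_mul_X_pow, derivative_C_mul_X, derivative_C,
    derivative_zero, eval_add, eval_mul, eval_C, eval_pow, eval_X, eval_zero]
  ring

theorem tricomiU3_tricomi :
    y * deriv (deriv fun x' => tricomiU3 a x' y) x + deriv (deriv fun y' => tricomiU3 a x y') y
      = 0 := by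
  rw [deriv_deriv_tricomiU3_left, deriv_deriv_tricomiU3_right]
  ring

theorem tricomiU3_neg_self {a : ℝ} (ha : a ≠ 0) : tricomiU3 a x (-a) = x^3 := by
  unfold tricomiU3
  field_simp
  ring

theorem tricomiU3_self : tricomiU3 a x a = 0 := by
  unfold tricomiU3
  ring

end tricomiU3

theorem tricomi_mixed_dirichlet_u3 (a : ℝ) (ha : 0 < a)
    (u : ℝ → ℝ → ℝ)
    (hu : ∀ x y : ℝ, u x y =
      (x/(4*a)) * (-2*x^2*y + 2*a*x^2 + y^4 - 2*a*y^3 + 2*a^3*y - a^4)) :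
    (∀ x y : ℝ,
      y * deriv (deriv (fun x' => u x' y)) x + deriv (deriv (fun y' => u x y')) y = 0)
    ∧ (∀ x : ℝ, u x (-a) = x^3) ∧ (∀ x : ℝ, u x a = 0) := by
  obtain rfl : u = tricomiU3 a := funext₂ hu
  exact ⟨tricomiU3_tricomi a, fun x => tricomiU3_neg_self x ha.ne', tricomiU3_self a⟩
end

section
/- Let a > 0, μ > 0, and c₁, c₂ ∈ ℝ. If Ai(−μa)·Bi(μa) − Ai(μa)·Bi(−μa) = 0, then the function w(x,y) = (c₁·sin(μ^{3/2}x) + c₂·cos(μ^{3/2}x))·(Bi(μy)·Ai(−μa) − Ai(μy)·Bi(−μa)) satisfies y·w_xx + w_yy = 0 on ℝ², and w(x,−a) = 0 and w(x,a) = 0 for all x. -/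
open Real

/-! Separation of variables: `w(x, y) = S(x) T(y)` solves `y w_xx + w_yy = 0` as soon as
`S'' = -l S` and `T''(y) = l y T(y)`. With `l = μ³`, `S` is a combination of `sin (μ^{3/2} x)`
and `cos (μ^{3/2} x)`, and `T(y) = F(μ y)` for a solution `F` of the Airy equation `F'' = t F`.
The solution `F = Ai(-μa) Bi - Bi(-μa) Ai` vanishes at `-μa` by construction, and at `μa`
because `μ` is a root of the determinant condition. -/

theorem deriv_deriv_comp_mul_left (f : ℝ → ℝ) (c x : ℝ) :
    deriv (deriv fun x => f (c * x)) x = c ^ 2 * deriv (deriv f) (c * x) := by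
  have hf' : (deriv fun x => f (c * x)) = fun x => c * deriv f (c * x) :=
    funext fun x => deriv_comp_mul_left c f x
  rw [hf', deriv_const_mul_field, deriv_comp_mul_left, smul_eq_mul]
  ring

theorem deriv_deriv_const_mul_add_const_mul {f g : ℝ → ℝ} (hf : ContDiff ℝ 2 f)
    (hg : ContDiff ℝ 2 g) (α β t : ℝ) :
    deriv (deriv fun t => α * f t + β * g t) t
      = α * deriv (deriv f) t + β * deriv (deriv g) t := by
  have hfg' : (deriv fun t => α * f t + β * g t) = fun t => α * deriv f t + β * deriv g t :=
    funext fun s => (((hf.differentiable two_ne_zero s).hasDerivAt.const_mul α).add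
      ((hg.differentiable two_ne_zero s).hasDerivAt.const_mul β)).deriv
  rw [hfg']
  exact (((hf.differentiable_deriv_two t).hasDerivAt.const_mul α).add
    ((hg.differentiable_deriv_two t).hasDerivAt.const_mul β)).deriv

theorem deriv_deriv_const_mul_sin_add_const_mul_cos (c₁ c₂ t : ℝ) :
    deriv (deriv fun t => c₁ * sin t + c₂ * cos t) t = -(c₁ * sin t + c₂ * cos t) := by
  rw [deriv_deriv_const_mul_add_const_mul contDiff_sin contDiff_cos, Real.deriv_sin,
    Real.deriv_cos', deriv.fun_neg, Real.deriv_sin]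
  ring

theorem airy_const_mul_add_const_mul {f g : ℝ → ℝ} (hf : ContDiff ℝ 2 f) (hg : ContDiff ℝ 2 g)
    (hf_airy : ∀ t, deriv (deriv f) t = t * f t) (hg_airy : ∀ t, deriv (deriv g) t = t * g t)
    (α β t : ℝ) :
    deriv (deriv fun t => α * f t + β * g t) t = t * (α * f t + β * g t) := by
  rw [deriv_deriv_const_mul_add_const_mul hf hg, hf_airy, hg_airy]
  ring

theorem tricomi_eq_zero_of_separated {S T : ℝ → ℝ} {l : ℝ}
    (hS : ∀ x, deriv (deriv S) x = -l * S x) (hT : ∀ y, deriv (deriv T) y = l * y * T y)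
    (x y : ℝ) :
    y * deriv (deriv fun x' => S x' * T y) x + deriv (deriv fun y' => S x * T y') y = 0 := by
  rw [deriv_mul_const_field', deriv_mul_const_field, deriv_const_mul_field',
    deriv_const_mul_field, hS, hT]
  ring

theorem tricomi_nonuniqueness_mixed_general
    (Ai Bi : ℝ → ℝ)
    (hAiSmooth : ContDiff ℝ ⊤ Ai) (hBiSmooth : ContDiff ℝ ⊤ Bi)
    (hAi : ∀ t : ℝ, deriv (deriv Ai) t = t * Ai t)
    (hBi : ∀ t : ℝ, deriv (deriv Bi) t = t * Bi t)
    (a μ c₁ c₂ : ℝ) (hμ : 0 < μ)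
    (hroot : Ai (-μ * a) * Bi (μ * a) - Ai (μ * a) * Bi (-μ * a) = 0)
    (w : ℝ → ℝ → ℝ)
    (hw : ∀ x y : ℝ, w x y =
      (c₁ * Real.sin (μ ^ ((3:ℝ)/2) * x) + c₂ * Real.cos (μ ^ ((3:ℝ)/2) * x)) *
        (Bi (μ * y) * Ai (-μ * a) - Ai (μ * y) * Bi (-μ * a))) :
    (∀ x y : ℝ,
      y * deriv (deriv (fun x' => w x' y)) x + deriv (deriv (fun y' => w x y')) y = 0)
    ∧ (∀ x : ℝ, w x (-a) = 0) ∧ (∀ x : ℝ, w x a = 0) := by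
  have hk : (μ ^ ((3 : ℝ) / 2)) ^ 2 = μ ^ 3 := by
    rw [← rpow_natCast, ← rpow_mul hμ.le, ← rpow_natCast]
    norm_num
  set G : ℝ → ℝ := fun t => c₁ * sin t + c₂ * cos t
  set F : ℝ → ℝ := fun t => Ai (-μ * a) * Bi t + -Bi (-μ * a) * Ai t with hF_def
  have hG : ∀ t, deriv (deriv G) t = -G t := deriv_deriv_const_mul_sin_add_const_mul_cos c₁ c₂
  have hF : ∀ t, deriv (deriv F) t = t * F t :=
    airy_const_mul_add_const_mul (hBiSmooth.of_le le_top) (hAiSmooth.of_le le_top) hBi hAi _ _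
  have hw_sep : w = fun x y => G (μ ^ ((3 : ℝ) / 2) * x) * F (μ * y) := by
    ext x y
    rw [hw]
    ring
  have hF_neg : F (μ * -a) = 0 := by
    rw [hF_def, mul_neg, ← neg_mul]
    ring
  have hF_pos : F (μ * a) = 0 := by
    rw [hF_def]
    linarith
  subst hw_sep
  refine ⟨tricomi_eq_zero_of_separated (l := μ ^ 3) (fun x => ?_) (fun y => ?_),
    fun x => ?_, fun x => ?_⟩
  · rw [deriv_deriv_comp_mul_left, hG, hk]
    ring
  · rw [deriv_deriv_comp_mul_left, hF]
    ring
  · exact mul_eq_zero_of_right _ hF_neg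
  · exact mul_eq_zero_of_right _ hF_pos

/-- Nonuniqueness of the Dirichlet problem in the mixed strip `-a < y < a`:
if `μ > 0` is a root of `Ai(-μa)·Bi(μa) - Ai(μa)·Bi(-μa) = 0`, then
`w(x,y) = (c₁ sin(μ^{3/2} x) + c₂ cos(μ^{3/2} x))·(Bi(μy)Ai(-μa) - Ai(μy)Bi(-μa))`
solves the homogeneous Tricomi equation with zero boundary data.
`Ai` and `Bi` denote the Airy functions, which are smooth solutions of `f'' = t·f`. -/
theorem tricomi_nonuniqueness_mixed
    (Ai Bi : ℝ → ℝ)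
    (hAiSmooth : ContDiff ℝ ⊤ Ai) (hBiSmooth : ContDiff ℝ ⊤ Bi)
    (hAi : ∀ t : ℝ, deriv (deriv Ai) t = t * Ai t)
    (hBi : ∀ t : ℝ, deriv (deriv Bi) t = t * Bi t)
    (a μ c₁ c₂ : ℝ) (ha : 0 < a) (hμ : 0 < μ)
    (hroot : Ai (-μ * a) * Bi (μ * a) - Ai (μ * a) * Bi (-μ * a) = 0)
    (w : ℝ → ℝ → ℝ)
    (hw : ∀ x y : ℝ, w x y =
      (c₁ * Real.sin (μ ^ ((3:ℝ)/2) * x) + c₂ * Real.cos (μ ^ ((3:ℝ)/2) * x)) *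
        (Bi (μ * y) * Ai (-μ * a) - Ai (μ * y) * Bi (-μ * a))) :
    (∀ x y : ℝ,
      y * deriv (deriv (fun x' => w x' y)) x + deriv (deriv (fun y' => w x y')) y = 0)
    ∧ (∀ x : ℝ, w x (-a) = 0) ∧ (∀ x : ℝ, w x a = 0) :=
  tricomi_nonuniqueness_mixed_general Ai Bi hAiSmooth hBiSmooth hAi hBi a μ c₁ c₂ hμ hroot w hw
end
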